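/- In the free group F_4, each of the six long relators with indices in {1,2,4}, i.e. the set R_{1,2,4} corresponding to the relations λ_{1,2}λ_{1,4}λ_{2,4}=λ_{2,4}λ_{1,4}λ_{1,2}, λ_{2,1}λ_{2,4}λ_{1,4}=λ_{1,4}λ_{2,4}λ_{2,1}, λ_{1,4}λ_{1,2}λ_{4,2}=λ_{4,2}λ_{1,2}λ_{1,4}, λ_{4,1}λ_{4,2}λ_{1,2}=λ_{1,2}λ_{4,2}λ_{4,1}, λ_{2,4}λ_{2,1}λ_{4,1}=λ_{4,1}λ_{2,1}λ_{2,4}, λ_{4,2}λ_{4,1}λ_{2,1}=λ_{2,1}λ_{4,1}λ_{4,2}, lies in the normal closure of R^V(3) ∪ S_2(R^V(3)) ∪ CR(4), where R^V(3) ⊆ F_4 via the canonical inclusion F_3 → F_4. -/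

import Mathlib

/-- The ambient free group with generators `λ i j` indexed by ordered pairs of naturals;
the sub-free-group `F_m` is spanned by the generators `lam i j` with `1 ≤ i ≠ j ≤ m`,
and the canonical inclusion `F_m → F_{m'}` is the identity on generators. -/
abbrev FG : Type := FreeGroup (ℕ × ℕ)

/-- The generator `λ_{i,j}`. -/
def lam (i j : ℕ) : FG := FreeGroup.of (i, j)

/-- The commutativity relators `λ_{i,j} λ_{k,l} λ_{i,j}⁻¹ λ_{k,l}⁻¹` of `VP_m`,
for pairwise distinct indices `1 ≤ i, j, k, l ≤ m`. -/
def CR (m : ℕ) : Set FG :=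
  {w | ∃ i j k l : ℕ,
    1 ≤ i ∧ i ≤ m ∧ 1 ≤ j ∧ j ≤ m ∧ 1 ≤ k ∧ k ≤ m ∧ 1 ≤ l ∧ l ≤ m ∧
    i ≠ j ∧ i ≠ k ∧ i ≠ l ∧ j ≠ k ∧ j ≠ l ∧ k ≠ l ∧
    w = lam i j * lam k l * (lam i j)⁻¹ * (lam k l)⁻¹}

/-- The long relators `λ_{k,i} λ_{k,j} λ_{i,j} λ_{k,i}⁻¹ λ_{k,j}⁻¹ λ_{i,j}⁻¹` of `VP_m`,
for pairwise distinct indices `1 ≤ i, j, k ≤ m`. -/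
def LongR (m : ℕ) : Set FG :=
  {w | ∃ i j k : ℕ,
    1 ≤ i ∧ i ≤ m ∧ 1 ≤ j ∧ j ≤ m ∧ 1 ≤ k ∧ k ≤ m ∧
    i ≠ j ∧ i ≠ k ∧ j ≠ k ∧
    w = lam k i * lam k j * lam i j * (lam k i)⁻¹ * (lam k j)⁻¹ * (lam i j)⁻¹}

/-- The full relator set `R^V(m)` of the virtual pure braid group `VP_m`. -/
def RV (m : ℕ) : Set FG := CR m ∪ LongR m

/-- Value of `S_{i-1}` on a generator, given by the displayed case formulas:
for `k < l`, `S_{i-1}(λ_{k,l})` and `S_{i-1}(λ_{l,k})` according to the position of `i`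
relative to `k` and `l`. -/
def Sgen (i : ℕ) (p : ℕ × ℕ) : FG :=
  if p.1 < p.2 then
    -- the generator is `λ_{k,l}` with `k = p.1 < l = p.2`
    if i < p.1 then lam (p.1 + 1) (p.2 + 1)
    else if i = p.1 then lam p.1 (p.2 + 1) * lam (p.1 + 1) (p.2 + 1)
    else if i < p.2 then lam p.1 (p.2 + 1)
    else if i = p.2 then lam p.1 (p.2 + 1) * lam p.1 p.2
    else lam p.1 p.2
  else if p.2 < p.1 then
    -- the generator is `λ_{l,k}` with `k = p.2 < l = p.1`
    if i < p.2 then lam (p.1 + 1) (p.2 + 1)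
    else if i = p.2 then lam (p.1 + 1) (p.2 + 1) * lam (p.1 + 1) p.2
    else if i < p.1 then lam (p.1 + 1) p.2
    else if i = p.1 then lam p.1 p.2 * lam (p.1 + 1) p.2
    else lam p.1 p.2
  else lam p.1 p.2

/-- The free-group homomorphism `S_t = S_{(t+1)-1} : F_m → F_{m+1}` (doubling the
`(t+1)`-st strand), determined on generators by the displayed case formulas. -/
def Smap (t : ℕ) : FG →* FG := FreeGroup.lift (Sgen (t + 1))

/-- The relator `u * v⁻¹` of a relation `u = v`. -/
def relOf (u v : FG) : FG := u * v⁻¹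

/-- The set `R_{i,j,k}` of the six long relators with indices in `{i, j, k}`. -/
def Rtriple (i j k : ℕ) : Set FG :=
  {relOf (lam i j * lam i k * lam j k) (lam j k * lam i k * lam i j),
   relOf (lam j i * lam j k * lam i k) (lam i k * lam j k * lam j i),
   relOf (lam i k * lam i j * lam k j) (lam k j * lam i j * lam i k),
   relOf (lam k i * lam k j * lam i j) (lam i j * lam k j * lam k i),
   relOf (lam j k * lam j i * lam k i) (lam k i * lam j i * lam j k),
   relOf (lam k j * lam k i * lam j i) (lam j i * lam k i * lam k j)}

/-- The commutator `[a,b] = a⁻¹ b⁻¹ a b`. -/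
def commE (a b : FG) : FG := a⁻¹ * b⁻¹ * a * b

/-- The automorphism of the free group induced by a permutation of the indices:
`λ_{i,j} ↦ λ_{σ(i),σ(j)}`. -/
def permF (σ : Equiv.Perm ℕ) : FG →* FG :=
  FreeGroup.lift (fun p => lam (σ p.1) (σ p.2))

/-!
Each relation of `R_{1,2,4}` comes from a long relation `abc = cba` of `R^V(3)` in which
exactly one generator, `λ_{1,2}` or `λ_{2,1}`, avoids the index `3`. Applying `S_2` doubles
the other two generators into products `λ_{p,4}λ_{p,3}`, `λ_{3,p}λ_{4,p}`; commuting
`3`-factors past `4`-factors of different generators with `CR(4)` and then cancelling the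
original relation on the `3`-factors leaves the corresponding relation on `{1,2,4}`.
-/

section

variable {G H : Type*} [Group G] [Group H]

def LongRel (a b c : G) : Prop := a * b * c = c * b * a

def longRelator (a b c : G) : G := a * b * c * a⁻¹ * b⁻¹ * c⁻¹

theorem longRelator_eq_one_iff {a b c : G} : longRelator a b c = 1 ↔ LongRel a b c := by
  rw [longRelator, LongRel, ← mul_inv_eq_one (a := a * b * c)]
  simp only [mul_inv_rev, mul_assoc]

theorem map_longRelator (f : G →* H) (a b c : G) :
    f (longRelator a b c) = longRelator (f a) (f b) (f c) := by
  simp only [longRelator, map_mul, map_inv]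

namespace LongRel

variable {x y₁ y₂ z₁ z₂ : G}

theorem of_left_mul_mul (h : LongRel x (y₁ * y₂) (z₁ * z₂)) (h₂ : LongRel x y₂ z₂)
    (hc₁ : Commute y₂ z₁) (hc₂ : Commute y₁ z₂) : LongRel x y₁ z₁ := by
  refine mul_right_cancel (b := y₂ * z₂) ?_
  calc x * y₁ * z₁ * (y₂ * z₂) = x * y₁ * (z₁ * y₂) * z₂ := by group
    _ = x * (y₁ * y₂) * (z₁ * z₂) := by rw [← hc₁.eq]; group
    _ = z₁ * z₂ * (y₁ * y₂) * x := h
    _ = z₁ * (z₂ * y₁) * y₂ * x := by group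
    _ = z₁ * y₁ * (z₂ * y₂ * x) := by rw [← hc₂.eq]; group
    _ = z₁ * y₁ * x * (y₂ * z₂) := by rw [← h₂]; group

theorem of_mul_mid_mul (h : LongRel (y₁ * y₂) x (z₁ * z₂)) (h₂ : LongRel y₂ x z₁)
    (hc₁ : Commute y₂ z₂) (hc₂ : Commute y₁ z₁) : LongRel y₁ x z₂ := by
  refine mul_right_cancel (b := y₂) (mul_left_cancel (a := z₁) ?_)
  calc z₁ * (y₁ * x * z₂ * y₂) = (z₁ * y₁) * x * (z₂ * y₂) := by group
    _ = y₁ * (z₁ * x * y₂) * z₂ := by rw [← hc₂.eq, ← hc₁.eq]; group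
    _ = y₁ * y₂ * x * (z₁ * z₂) := by rw [← h₂]; group
    _ = z₁ * (z₂ * x * y₁ * y₂) := by rw [h]; group

theorem of_mul_mul_right (h : LongRel (y₁ * y₂) (z₁ * z₂) x) (h₁ : LongRel y₁ z₁ x)
    (hc₁ : Commute y₂ z₁) (hc₂ : Commute z₂ y₁) : LongRel y₂ z₂ x := by
  refine mul_left_cancel (a := y₁ * z₁) ?_
  calc y₁ * z₁ * (y₂ * z₂ * x) = y₁ * (z₁ * y₂) * z₂ * x := by group
    _ = y₁ * y₂ * (z₁ * z₂) * x := by rw [← hc₁.eq]; group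
    _ = x * (z₁ * z₂) * (y₁ * y₂) := h
    _ = x * z₁ * (z₂ * y₁) * y₂ := by group
    _ = x * z₁ * y₁ * (z₂ * y₂) := by rw [hc₂.eq]; group
    _ = y₁ * z₁ * (x * z₂ * y₂) := by rw [← h₁]; group

end LongRel

end

section Quotient

open scoped commutatorElement

variable {G : Type*} [Group G] {N : Subgroup G} [N.Normal]

theorem longRel_mk_of_mem {a b c : G} (h : longRelator a b c ∈ N) :
    LongRel (a : G ⧸ N) b c :=
  longRelator_eq_one_iff.mp <| (map_longRelator (QuotientGroup.mk' N) a b c).symm.trans <|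
    (QuotientGroup.eq_one_iff _).mpr h

theorem commute_mk_of_mem {a b : G} (h : ⁅a, b⁆ ∈ N) : Commute (a : G ⧸ N) b :=
  commutatorElement_eq_one_iff_commute.mp <|
    (map_commutatorElement (QuotientGroup.mk' N) a b).symm.trans <|
      (QuotientGroup.eq_one_iff _).mpr h

theorem relOf_mem_of_longRel {N : Subgroup FG} [N.Normal] {a b c : FG}
    (h : LongRel (a : FG ⧸ N) b c) : relOf (a * b * c) (c * b * a) ∈ N := by
  rw [relOf, ← div_eq_mul_inv, ← QuotientGroup.eq_iff_div_mem]
  simp only [QuotientGroup.mk_mul]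
  exact h

end Quotient

theorem longRelator_lam_mem_LongR {m i j k : ℕ}
    (h : 1 ≤ i ∧ i ≤ m ∧ 1 ≤ j ∧ j ≤ m ∧ 1 ≤ k ∧ k ≤ m ∧ i ≠ j ∧ i ≠ k ∧ j ≠ k) :
    longRelator (lam k i) (lam k j) (lam i j) ∈ LongR m := by
  obtain ⟨h₁, h₂, h₃, h₄, h₅, h₆, h₇, h₈, h₉⟩ := h
  exact ⟨i, j, k, h₁, h₂, h₃, h₄, h₅, h₆, h₇, h₈, h₉, rfl⟩

open scoped commutatorElement in
theorem commutatorElement_lam_mem_CR {m i j k l : ℕ}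
    (h : 1 ≤ i ∧ i ≤ m ∧ 1 ≤ j ∧ j ≤ m ∧ 1 ≤ k ∧ k ≤ m ∧ 1 ≤ l ∧ l ≤ m ∧
      i ≠ j ∧ i ≠ k ∧ i ≠ l ∧ j ≠ k ∧ j ≠ l ∧ k ≠ l) :
    ⁅lam i j, lam k l⁆ ∈ CR m := by
  obtain ⟨h₁, h₂, h₃, h₄, h₅, h₆, h₇, h₈, h₉, h₁₀, h₁₁, h₁₂, h₁₃, h₁₄⟩ := h
  exact ⟨i, j, k, l, h₁, h₂, h₃, h₄, h₅, h₆, h₇, h₈, h₉, h₁₀, h₁₁, h₁₂, h₁₃, h₁₄, rfl⟩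

theorem Smap_lam (t i j : ℕ) : Smap t (lam i j) = Sgen (t + 1) (i, j) :=
  FreeGroup.lift_apply_of

section NormalClosure

open Subgroup

variable {R : Set FG} {m : ℕ}

theorem longRel_lam (hR : LongR m ⊆ R) (i j k : ℕ)
    (h : 1 ≤ i ∧ i ≤ m ∧ 1 ≤ j ∧ j ≤ m ∧ 1 ≤ k ∧ k ≤ m ∧ i ≠ j ∧ i ≠ k ∧ j ≠ k) :
    LongRel (lam k i : FG ⧸ normalClosure R) (lam k j) (lam i j) :=
  longRel_mk_of_mem (subset_normalClosure (hR (longRelator_lam_mem_LongR h)))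

theorem longRel_map_lam (f : FG →* FG) (hR : f '' LongR m ⊆ R) (i j k : ℕ)
    (h : 1 ≤ i ∧ i ≤ m ∧ 1 ≤ j ∧ j ≤ m ∧ 1 ≤ k ∧ k ≤ m ∧ i ≠ j ∧ i ≠ k ∧ j ≠ k) :
    LongRel (f (lam k i) : FG ⧸ normalClosure R) (f (lam k j)) (f (lam i j)) :=
  longRel_mk_of_mem <| subset_normalClosure <|
    hR ⟨_, longRelator_lam_mem_LongR h, map_longRelator f _ _ _⟩

theorem commute_lam (hR : CR m ⊆ R) (i j k l : ℕ)
    (h : 1 ≤ i ∧ i ≤ m ∧ 1 ≤ j ∧ j ≤ m ∧ 1 ≤ k ∧ k ≤ m ∧ 1 ≤ l ∧ l ≤ m ∧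
      i ≠ j ∧ i ≠ k ∧ i ≠ l ∧ j ≠ k ∧ j ≠ l ∧ k ≠ l) :
    Commute (lam i j : FG ⧸ normalClosure R) (lam k l) :=
  commute_mk_of_mem (subset_normalClosure (hR (commutatorElement_lam_mem_CR h)))

end NormalClosure

/-- each of the six long relators of `R_{1,2,4}` lies in the normal
closure in `F_4` of `R^V(3) ∪ S_2(R^V(3)) ∪ CR(4)`. -/
theorem R124_in_normalClosure :
    Rtriple 1 2 4 ⊆
      (Subgroup.normalClosure (RV 3 ∪ (Smap 2) '' (RV 3) ∪ CR 4) : Set FG) := by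
  have hL : LongR 3 ⊆ RV 3 ∪ (Smap 2) '' (RV 3) ∪ CR 4 := fun _ hw ↦ .inl (.inl (.inr hw))
  have hS : Smap 2 '' LongR 3 ⊆ RV 3 ∪ (Smap 2) '' (RV 3) ∪ CR 4 :=
    fun _ ⟨v, hv, hvw⟩ ↦ .inl (.inr ⟨v, .inr hv, hvw⟩)
  have hC : CR 4 ⊆ RV 3 ∪ (Smap 2) '' (RV 3) ∪ CR 4 := Set.subset_union_right
  have long := longRel_lam hL
  have longS := longRel_map_lam _ hS
  have comm := commute_lam hC
  simp only [Smap_lam, Sgen] at longS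
  intro w hw
  simp only [Rtriple, Set.mem_insert_iff, Set.mem_singleton_iff] at hw
  rcases hw with rfl | rfl | rfl | rfl | rfl | rfl <;> apply relOf_mem_of_longRel
  · exact .of_left_mul_mul (by simpa using longS 2 3 1 (by decide)) (long 2 3 1 (by decide))
      (comm 1 3 2 4 (by decide)) (comm 1 4 2 3 (by decide))
  · exact .of_left_mul_mul (by simpa using longS 1 3 2 (by decide)) (long 1 3 2 (by decide))
      (comm 2 3 1 4 (by decide)) (comm 2 4 1 3 (by decide))
  · exact .of_mul_mid_mul (by simpa using longS 3 2 1 (by decide)) (long 3 2 1 (by decide))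
      (comm 1 3 4 2 (by decide)) (comm 1 4 3 2 (by decide))
  · exact .of_mul_mul_right (by simpa using longS 1 2 3 (by decide)) (long 1 2 3 (by decide))
      (comm 4 1 3 2 (by decide)) (comm 4 2 3 1 (by decide))
  · exact .of_mul_mid_mul (by simpa using longS 3 1 2 (by decide)) (long 3 1 2 (by decide))
      (comm 2 3 4 1 (by decide)) (comm 2 4 3 1 (by decide))
  · exact .of_mul_mul_right (by simpa using longS 2 1 3 (by decide)) (long 2 1 3 (by decide))
      (comm 4 2 3 1 (by decide)) (comm 4 1 3 2 (by decide))
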